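/- Let G=(V,E) be an undirected connected simple locally finite graph such that κ(x,y) > 0 for all neighboring x,y. Then for every function f: V → ℝ and every vertex x, Γ₂(f,f)(x) ≥ (1/2)(Δf(x))² + (5/(2D(x)) − 1)·Γ(f,f)(x), where D(x) = max_{y∼x} d_y. -/
import Mathlib


open SimpleGraph Finset

variable {V : Type*}

/-- The probability measure attached to a vertex `x`: uniform on its neighbors. -/
noncomputable def nbrMeasure (G : SimpleGraph V) [G.LocallyFinite] [DecidableRel G.Adj]
    (x z : V) : ℝ :=
  if G.Adj x z then ((G.degree x : ℝ))⁻¹ else 0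

/-- A coupling (transfer plan) between the measures `m_x` and `m_y`. -/
def IsCoupling (G : SimpleGraph V) [G.LocallyFinite] [DecidableRel G.Adj]
    (x y : V) (ξ : V → V → ℝ) : Prop :=
  (∀ u v, 0 ≤ ξ u v) ∧
  (∀ u v, ξ u v ≠ 0 → G.Adj x u ∧ G.Adj y v) ∧
  (∀ u, ∑ v ∈ G.neighborFinset y, ξ u v = nbrMeasure G x u) ∧
  (∀ v, ∑ u ∈ G.neighborFinset x, ξ u v = nbrMeasure G y v)

/-- The transportation distance `W₁(m_x, m_y)`. -/
noncomputable def W1 (G : SimpleGraph V) [G.LocallyFinite] [DecidableRel G.Adj]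
    (x y : V) : ℝ :=
  sInf { c : ℝ | ∃ ξ : V → V → ℝ, IsCoupling G x y ξ ∧
    c = ∑ u ∈ G.neighborFinset x, ∑ v ∈ G.neighborFinset y, (G.dist u v : ℝ) * ξ u v }

/-- Ollivier's Ricci curvature `κ(x,y) = 1 - W₁(m_x,m_y)/d(x,y)`. -/
noncomputable def ricci (G : SimpleGraph V) [G.LocallyFinite] [DecidableRel G.Adj]
    (x y : V) : ℝ :=
  1 - W1 G x y / (G.dist x y : ℝ)

/-- Positive part of a real number: `a₊ = max a 0`. -/
noncomputable def posPart' (a : ℝ) : ℝ := max a 0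

/-- `♯(x,y)`: the number of common neighbors of `x` and `y`. -/
def triangles (G : SimpleGraph V) [G.LocallyFinite] [DecidableEq V] (x y : V) : ℕ :=
  (G.neighborFinset x ∩ G.neighborFinset y).card

/-- The graph Laplacian `Δf(x) = (1/d_x)∑_{y∼x} f(y) - f(x)`. -/
noncomputable def lap (G : SimpleGraph V) [G.LocallyFinite] (f : V → ℝ) (x : V) : ℝ :=
  (G.degree x : ℝ)⁻¹ * ∑ y ∈ G.neighborFinset x, f y - f x

/-- The Bakry–Émery operator `Γ(f,g)(x) = (1/2)(Δ(fg) - fΔg - gΔf)(x)`. -/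
noncomputable def gam (G : SimpleGraph V) [G.LocallyFinite] (f g : V → ℝ) (x : V) : ℝ :=
  (1 / 2) * (lap G (f * g) x - f x * lap G g x - g x * lap G f x)

/-- The Bakry–Émery operator `Γ₂(f,f)(x) = (1/2)(ΔΓ(f,f) - 2Γ(f,Δf))(x)`. -/
noncomputable def gam2 (G : SimpleGraph V) [G.LocallyFinite] (f : V → ℝ) (x : V) : ℝ :=
  (1 / 2) * (lap G (gam G f f) x - 2 * gam G f (lap G f) x)

/-- `D(x) = max_{y∼x} d_y`. -/
def Dmax (G : SimpleGraph V) [G.LocallyFinite] (x : V) : ℕ :=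
  (G.neighborFinset x).sup (fun z => G.degree z)

set_option linter.unusedSectionVars false

section AuxLemmas

variable (G : SimpleGraph V) [G.LocallyFinite] [DecidableRel G.Adj]

lemma sum_nbrMeasure (x : V) (hx : G.degree x ≠ 0) :
    ∑ u ∈ G.neighborFinset x, nbrMeasure G x u = 1 := by
  have : ∀ u ∈ G.neighborFinset x, nbrMeasure G x u = ((G.degree x : ℝ))⁻¹ := by
    intro u hu
    simp [nbrMeasure, (G.mem_neighborFinset _ _).1 hu]
  rw [Finset.sum_congr rfl this, Finset.sum_const, card_neighborFinset_eq_degree,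
    nsmul_eq_mul]
  field_simp

lemma nbrMeasure_nonneg (x u : V) : 0 ≤ nbrMeasure G x u := by
  unfold nbrMeasure; split <;> positivity

lemma common_nbr_nonempty [DecidableEq V] (hG : G.Connected)
    (hκ : ∀ x y : V, G.Adj x y → 0 < ricci G x y) (x y : V) (hxy : G.Adj x y) :
    (G.neighborFinset x ∩ G.neighborFinset y).Nonempty := by
  by_contra hne
  rw [Finset.not_nonempty_iff_eq_empty] at hne
  have hdx : G.degree x ≠ 0 := by
    have : y ∈ G.neighborFinset x := (G.mem_neighborFinset _ _).2 hxy
    rw [← card_neighborFinset_eq_degree]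
    exact Finset.card_ne_zero_of_mem this
  have hdy : G.degree y ≠ 0 := by
    have : x ∈ G.neighborFinset y := (G.mem_neighborFinset _ _).2 hxy.symm
    rw [← card_neighborFinset_eq_degree]
    exact Finset.card_ne_zero_of_mem this
  have hdist : ∀ u v : V, G.Adj x u → G.Adj y v → (1 : ℝ) ≤ (G.dist u v : ℝ) := by
    intro u v hu hv
    have huv : u ≠ v := by
      rintro rfl
      have : u ∈ G.neighborFinset x ∩ G.neighborFinset y :=
        Finset.mem_inter.2 ⟨(G.mem_neighborFinset _ _).2 hu, (G.mem_neighborFinset _ _).2 hv⟩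
      simp [hne] at this
    have := hG.pos_dist_of_ne huv
    exact_mod_cast this
  set ξ : V → V → ℝ := fun u v => nbrMeasure G x u * nbrMeasure G y v with hξ
  have hcoup : IsCoupling G x y ξ := by
    refine ⟨fun u v => mul_nonneg (nbrMeasure_nonneg G x u) (nbrMeasure_nonneg G y v),
      fun u v h => ?_, fun u => ?_, fun v => ?_⟩
    · constructor
      · by_contra hadj
        simp [hξ, nbrMeasure, hadj] at h
      · by_contra hadj
        simp [hξ, nbrMeasure, hadj] at h
    · rw [← Finset.mul_sum, sum_nbrMeasure G y hdy, mul_one]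
    · have : ∀ u ∈ G.neighborFinset x, ξ u v = nbrMeasure G y v * nbrMeasure G x u := by
        intro u _; rw [hξ]; ring
      rw [Finset.sum_congr rfl this, ← Finset.mul_sum, sum_nbrMeasure G x hdx, mul_one]
  have hmem : (∑ u ∈ G.neighborFinset x, ∑ v ∈ G.neighborFinset y, (G.dist u v : ℝ) * ξ u v)
      ∈ { c : ℝ | ∃ ξ : V → V → ℝ, IsCoupling G x y ξ ∧
        c = ∑ u ∈ G.neighborFinset x, ∑ v ∈ G.neighborFinset y, (G.dist u v : ℝ) * ξ u v } :=
    ⟨ξ, hcoup, rfl⟩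
  have hW : 1 ≤ W1 G x y := by
    apply le_csInf ⟨_, hmem⟩
    rintro c ⟨ξ', ⟨hpos, hsupp, hmx, hmy⟩, rfl⟩
    have step : ∀ u ∈ G.neighborFinset x, ∀ v ∈ G.neighborFinset y,
        ξ' u v ≤ (G.dist u v : ℝ) * ξ' u v := by
      intro u hu v hv
      rcases eq_or_ne (ξ' u v) 0 with h0 | h0
      · rw [h0]; simp
      · obtain ⟨h1, h2⟩ := hsupp u v h0
        nlinarith [hdist u v h1 h2, hpos u v]
    calc (1 : ℝ) = ∑ u ∈ G.neighborFinset x, nbrMeasure G x u :=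
          (sum_nbrMeasure G x hdx).symm
      _ = ∑ u ∈ G.neighborFinset x, ∑ v ∈ G.neighborFinset y, ξ' u v :=
          Finset.sum_congr rfl fun u _ => (hmx u).symm
      _ ≤ ∑ u ∈ G.neighborFinset x, ∑ v ∈ G.neighborFinset y, (G.dist u v : ℝ) * ξ' u v :=
          Finset.sum_le_sum fun u hu => Finset.sum_le_sum fun v hv => step u hu v hv
  have hd1 : G.dist x y = 1 := (SimpleGraph.dist_eq_one_iff_adj).2 hxy
  have := hκ x y hxy
  rw [ricci, hd1] at this
  norm_num at this
  linarith

lemma gam_eq (f : V → ℝ) (v : V) (hv : G.degree v ≠ 0) :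
    gam G f f v = (2 * (G.degree v : ℝ))⁻¹ * ∑ z ∈ G.neighborFinset v, (f z - f v) ^ 2 := by
  have hd : (G.degree v : ℝ) ≠ 0 := Nat.cast_ne_zero.2 hv
  have h1 : ∑ z ∈ G.neighborFinset v, (f z - f v) ^ 2
      = (∑ z ∈ G.neighborFinset v, f z * f z)
        - 2 * f v * (∑ z ∈ G.neighborFinset v, f z)
        + (G.degree v : ℝ) * (f v * f v) := by
    have : ∀ z ∈ G.neighborFinset v, (f z - f v) ^ 2
        = f z * f z - 2 * f v * f z + f v * f v := by
      intro z _; ring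
    rw [Finset.sum_congr rfl this, Finset.sum_add_distrib, Finset.sum_sub_distrib,
      ← Finset.mul_sum, Finset.sum_const, card_neighborFinset_eq_degree, nsmul_eq_mul]
  simp only [gam, lap, Pi.mul_apply]
  rw [h1]
  field_simp
  ring

lemma gam_lap_eq (f : V → ℝ) (x y : V) (hy : G.degree y ≠ 0) :
    2 * gam G f f y - 2 * (f y - f x) * lap G f y
      = ((G.degree y : ℝ))⁻¹ * ∑ z ∈ G.neighborFinset y, (f z - 2 * f y + f x) ^ 2
        - (f y - f x) ^ 2 := by
  have hd : (G.degree y : ℝ) ≠ 0 := Nat.cast_ne_zero.2 hy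
  have h2 : ∑ z ∈ G.neighborFinset y, (f z - 2 * f y + f x) ^ 2
      = (∑ z ∈ G.neighborFinset y, f z * f z)
        + (2 * f x - 4 * f y) * (∑ z ∈ G.neighborFinset y, f z)
        + (G.degree y : ℝ) * ((f x - 2 * f y) * (f x - 2 * f y)) := by
    have : ∀ z ∈ G.neighborFinset y, (f z - 2 * f y + f x) ^ 2
        = f z * f z + (2 * f x - 4 * f y) * f z + (f x - 2 * f y) * (f x - 2 * f y) := by
      intro z _; ring
    rw [Finset.sum_congr rfl this, Finset.sum_add_distrib, Finset.sum_add_distrib,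
      ← Finset.mul_sum, Finset.sum_const, card_neighborFinset_eq_degree, nsmul_eq_mul]
  have h1 : ∑ z ∈ G.neighborFinset y, (f z - f y) ^ 2
      = (∑ z ∈ G.neighborFinset y, f z * f z)
        - 2 * f y * (∑ z ∈ G.neighborFinset y, f z)
        + (G.degree y : ℝ) * (f y * f y) := by
    have : ∀ z ∈ G.neighborFinset y, (f z - f y) ^ 2
        = f z * f z - 2 * f y * f z + f y * f y := by
      intro z _; ring
    rw [Finset.sum_congr rfl this, Finset.sum_add_distrib, Finset.sum_sub_distrib,
      ← Finset.mul_sum, Finset.sum_const, card_neighborFinset_eq_degree, nsmul_eq_mul]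
  rw [gam_eq G f y hy, h1, h2, lap]
  field_simp
  ring

lemma gam2_eq (f : V → ℝ) (x : V) (hx : G.degree x ≠ 0)
    (hy : ∀ y ∈ G.neighborFinset x, G.degree y ≠ 0) :
    4 * gam2 G f x
      = (G.degree x : ℝ)⁻¹ * ∑ y ∈ G.neighborFinset x,
          (((G.degree y : ℝ))⁻¹ * ∑ z ∈ G.neighborFinset y, (f z - 2 * f y + f x) ^ 2)
        - 2 * ((G.degree x : ℝ)⁻¹ * ∑ y ∈ G.neighborFinset x, (f y - f x) ^ 2)
        + 2 * (lap G f x) ^ 2 := by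
  have hd : (G.degree x : ℝ) ≠ 0 := Nat.cast_ne_zero.2 hx
  set d : ℝ := (G.degree x : ℝ) with hdef
  set Nx := G.neighborFinset x with hNx
  have e1 : lap G (gam G f f) x = d⁻¹ * ∑ y ∈ Nx, gam G f f y - gam G f f x := rfl
  have e2 : lap G (f * lap G f) x
      = d⁻¹ * ∑ y ∈ Nx, (f y * lap G f y) - f x * lap G f x := rfl
  have e3 : lap G (lap G f) x = d⁻¹ * ∑ y ∈ Nx, lap G f y - lap G f x := rfl
  have e4 : gam G f (lap G f) x
      = (1 / 2) * ((d⁻¹ * ∑ y ∈ Nx, (f y * lap G f y) - f x * lap G f x)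
          - f x * (d⁻¹ * ∑ y ∈ Nx, lap G f y - lap G f x)
          - lap G f x * lap G f x) := by
    rw [gam, e2, e3]
  have e5 : gam G f f x = (1 / 2) * (d⁻¹ * ∑ y ∈ Nx, (f y - f x) ^ 2) := by
    rw [gam_eq G f x hx, mul_inv]
    ring
  have e6 : ∑ y ∈ Nx, (2 * gam G f f y - 2 * (f y - f x) * lap G f y)
      = 2 * (∑ y ∈ Nx, gam G f f y) - 2 * (∑ y ∈ Nx, f y * lap G f y)
        + 2 * f x * (∑ y ∈ Nx, lap G f y) := by
    have : ∀ y ∈ Nx, 2 * gam G f f y - 2 * (f y - f x) * lap G f y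
        = 2 * gam G f f y - 2 * (f y * lap G f y) + 2 * f x * lap G f y := by
      intro y _; ring
    rw [Finset.sum_congr rfl this, Finset.sum_add_distrib, Finset.sum_sub_distrib,
      ← Finset.mul_sum, ← Finset.mul_sum, ← Finset.mul_sum]
  have e7 : ∑ y ∈ Nx, (2 * gam G f f y - 2 * (f y - f x) * lap G f y)
      = ∑ y ∈ Nx, (((G.degree y : ℝ))⁻¹ * ∑ z ∈ G.neighborFinset y, (f z - 2 * f y + f x) ^ 2)
        - ∑ y ∈ Nx, (f y - f x) ^ 2 := by
    rw [← Finset.sum_sub_distrib]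
    exact Finset.sum_congr rfl fun y hy' => gam_lap_eq G f x y (hy y hy')
  have expand : 4 * gam2 G f x
      = d⁻¹ * (∑ y ∈ Nx, (2 * gam G f f y - 2 * (f y - f x) * lap G f y))
        - d⁻¹ * (∑ y ∈ Nx, (f y - f x) ^ 2) + 2 * (lap G f x) ^ 2 := by
    rw [gam2, e1, e4, e6, e5]
    ring
  rw [expand, e7]
  ring

lemma triangle_sum_ineq [DecidableEq V] (f : V → ℝ) (x : V)
    (hT : ∀ y ∈ G.neighborFinset x, (G.neighborFinset x ∩ G.neighborFinset y).Nonempty) :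
    ∑ y ∈ G.neighborFinset x, ∑ z ∈ G.neighborFinset x ∩ G.neighborFinset y,
        (f z - 2 * f y + f x) ^ 2
      ≥ ∑ y ∈ G.neighborFinset x, (f y - f x) ^ 2 := by
  set Nx := G.neighborFinset x with hNx
  set T : V → Finset V := fun y => G.neighborFinset x ∩ G.neighborFinset y with hTdef
  have hsy : ∀ (g : V → V → ℝ),
      (∑ y ∈ Nx, ∑ z ∈ T y, g y z) = ∑ y ∈ Nx, ∑ z ∈ T y, g z y := by
    intro g
    refine Finset.sum_comm' fun y z => ?_
    simp only [hTdef, Finset.mem_inter, SimpleGraph.mem_neighborFinset, hNx]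
    constructor
    · rintro ⟨h1, h2, h3⟩; exact ⟨⟨h1, h3.symm⟩, h2⟩
    · rintro ⟨⟨h1, h2⟩, h3⟩; exact ⟨h1, h3, h2.symm⟩
  have key : 2 * (∑ y ∈ Nx, ∑ z ∈ T y, (f z - 2 * f y + f x) ^ 2)
      ≥ 2 * ∑ y ∈ Nx, ∑ z ∈ T y, (f y - f x) ^ 2 := by
    have h1 : 2 * (∑ y ∈ Nx, ∑ z ∈ T y, (f z - 2 * f y + f x) ^ 2)
        = ∑ y ∈ Nx, ∑ z ∈ T y,
            ((f z - 2 * f y + f x) ^ 2 + (f y - 2 * f z + f x) ^ 2) := by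
      have := hsy (fun y z => (f z - 2 * f y + f x) ^ 2)
      simp only [Finset.sum_add_distrib]
      rw [← this]
      ring
    have h2 : ∑ y ∈ Nx, ∑ z ∈ T y,
          ((f z - 2 * f y + f x) ^ 2 + (f y - 2 * f z + f x) ^ 2)
        ≥ ∑ y ∈ Nx, ∑ z ∈ T y, ((f y - f x) ^ 2 + (f z - f x) ^ 2) := by
      refine Finset.sum_le_sum fun y _ => Finset.sum_le_sum fun z _ => ?_
      nlinarith [sq_nonneg (f y - f z)]
    have h3 : ∑ y ∈ Nx, ∑ z ∈ T y, ((f y - f x) ^ 2 + (f z - f x) ^ 2)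
        = 2 * ∑ y ∈ Nx, ∑ z ∈ T y, (f y - f x) ^ 2 := by
      have := hsy (fun y z => (f y - f x) ^ 2)
      simp only [Finset.sum_add_distrib]
      rw [← this]
      ring
    linarith
  have last : ∑ y ∈ Nx, ∑ z ∈ T y, (f y - f x) ^ 2 ≥ ∑ y ∈ Nx, (f y - f x) ^ 2 := by
    refine Finset.sum_le_sum fun y hy => ?_
    rw [Finset.sum_const, nsmul_eq_mul]
    have hc : (1 : ℝ) ≤ ((T y).card : ℝ) := by
      have := Finset.card_pos.2 (hT y hy)
      exact_mod_cast this
    nlinarith [sq_nonneg (f y - f x)]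
  linarith

end AuxLemmas

/-- On a connected locally finite graph with `κ(x,y) > 0` for all
neighboring `x, y`, the Laplacian satisfies
`Γ₂(f,f)(x) ≥ (1/2)(Δf(x))² + (5/(2D(x)) - 1)·Γ(f,f)(x)`. -/
theorem CD_inequality_of_positive_ricci (G : SimpleGraph V) [G.LocallyFinite]
    [DecidableRel G.Adj]
    (hG : G.Connected) (hκ : ∀ x y : V, G.Adj x y → 0 < ricci G x y)
    (f : V → ℝ) (x : V) :
    gam2 G f x ≥
      (1 / 2) * (lap G f x) ^ 2 + (5 / (2 * (Dmax G x : ℝ)) - 1) * gam G f f x := by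
  classical
  by_cases hx : G.degree x = 0
  · -- degenerate case: x has no neighbors
    have hNx : G.neighborFinset x = ∅ := by
      rw [← Finset.card_eq_zero, card_neighborFinset_eq_degree]
      exact hx
    have hD0 : (Dmax G x : ℝ) = 0 := by simp [Dmax, hNx]
    rw [hD0]
    simp only [gam2, gam, lap, hNx, Finset.sum_empty, Pi.mul_apply, mul_zero, zero_sub,
      hx, Nat.cast_zero, inv_zero]
    norm_num
    nlinarith [sq_nonneg (f x)]
  · -- main case
    have hd : (0 : ℝ) < (G.degree x : ℝ) := by
      have : 0 < G.degree x := Nat.pos_of_ne_zero hx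
      exact_mod_cast this
    have hydeg : ∀ y ∈ G.neighborFinset x, G.degree y ≠ 0 := by
      intro y hy
      have : x ∈ G.neighborFinset y :=
        (G.mem_neighborFinset _ _).2 ((G.mem_neighborFinset _ _).1 hy).symm
      rw [← card_neighborFinset_eq_degree]
      exact Finset.card_ne_zero_of_mem this
    have hkey := gam2_eq G f x hx hydeg
    rw [gam_eq G f x hx]
    set Nx := G.neighborFinset x with hNxdef
    set Q : ℝ := ∑ y ∈ Nx, (f y - f x) ^ 2 with hQ
    set D : ℝ := (Dmax G x : ℝ) with hDdef
    have hDy : ∀ y ∈ Nx, (G.degree y : ℝ) ≤ D := by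
      intro y hy
      have := Finset.le_sup (f := fun z => G.degree z) hy
      rw [hDdef]
      exact_mod_cast this
    have hDpos : (0 : ℝ) < D := by
      have hcard : 0 < Nx.card := by
        rw [hNxdef, card_neighborFinset_eq_degree]
        exact Nat.pos_of_ne_zero hx
      obtain ⟨y, hy⟩ := Finset.card_pos.1 hcard
      have h1 : (0 : ℝ) < (G.degree y : ℝ) := by
        have := Nat.pos_of_ne_zero (hydeg y hy)
        exact_mod_cast this
      exact lt_of_lt_of_le h1 (hDy y hy)
    have hT : ∀ y ∈ Nx, (G.neighborFinset x ∩ G.neighborFinset y).Nonempty := fun y hy =>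
      common_nbr_nonempty G hG hκ x y ((G.mem_neighborFinset _ _).1 hy)
    have per_y : ∀ y ∈ Nx,
        D⁻¹ * (4 * (f y - f x) ^ 2 + ∑ z ∈ G.neighborFinset x ∩ G.neighborFinset y,
            (f z - 2 * f y + f x) ^ 2)
          ≤ ((G.degree y : ℝ))⁻¹ * ∑ z ∈ G.neighborFinset y, (f z - 2 * f y + f x) ^ 2 := by
      intro y hy
      have hadj : G.Adj x y := (G.mem_neighborFinset _ _).1 hy
      have hdy : (0 : ℝ) < (G.degree y : ℝ) := by
        have := Nat.pos_of_ne_zero (hydeg y hy)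
        exact_mod_cast this
      have hsub : insert x (G.neighborFinset x ∩ G.neighborFinset y)
          ⊆ G.neighborFinset y := by
        intro z hz
        rcases Finset.mem_insert.1 hz with rfl | hz
        · exact (G.mem_neighborFinset _ _).2 hadj.symm
        · exact (Finset.mem_inter.1 hz).2
      have hxnot : x ∉ G.neighborFinset x ∩ G.neighborFinset y := by
        simp [Finset.mem_inter]
      have hss : ∑ z ∈ insert x (G.neighborFinset x ∩ G.neighborFinset y),
            (f z - 2 * f y + f x) ^ 2
          ≤ ∑ z ∈ G.neighborFinset y, (f z - 2 * f y + f x) ^ 2 :=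
        Finset.sum_le_sum_of_subset_of_nonneg hsub (fun z _ _ => sq_nonneg _)
      rw [Finset.sum_insert hxnot] at hss
      have h4 : (f x - 2 * f y + f x) ^ 2 = 4 * (f y - f x) ^ 2 := by ring
      rw [h4] at hss
      have hinv : D⁻¹ ≤ ((G.degree y : ℝ))⁻¹ := inv_anti₀ hdy (hDy y hy)
      have hnn : 0 ≤ 4 * (f y - f x) ^ 2 + ∑ z ∈ G.neighborFinset x ∩ G.neighborFinset y,
          (f z - 2 * f y + f x) ^ 2 :=
        add_nonneg (by positivity) (Finset.sum_nonneg fun z _ => sq_nonneg _)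
      calc D⁻¹ * (4 * (f y - f x) ^ 2 + ∑ z ∈ G.neighborFinset x ∩ G.neighborFinset y,
              (f z - 2 * f y + f x) ^ 2)
          ≤ ((G.degree y : ℝ))⁻¹ * (4 * (f y - f x) ^ 2
              + ∑ z ∈ G.neighborFinset x ∩ G.neighborFinset y, (f z - 2 * f y + f x) ^ 2) :=
            mul_le_mul_of_nonneg_right hinv hnn
        _ ≤ ((G.degree y : ℝ))⁻¹ * ∑ z ∈ G.neighborFinset y, (f z - 2 * f y + f x) ^ 2 :=
            mul_le_mul_of_nonneg_left hss (inv_nonneg.2 hdy.le)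
    have hP : 5 * D⁻¹ * Q
        ≤ ∑ y ∈ Nx, (((G.degree y : ℝ))⁻¹
            * ∑ z ∈ G.neighborFinset y, (f z - 2 * f y + f x) ^ 2) := by
      have s1 := Finset.sum_le_sum per_y
      have s2 : ∑ y ∈ Nx, D⁻¹ * (4 * (f y - f x) ^ 2
            + ∑ z ∈ G.neighborFinset x ∩ G.neighborFinset y, (f z - 2 * f y + f x) ^ 2)
          = D⁻¹ * (4 * Q + ∑ y ∈ Nx, ∑ z ∈ G.neighborFinset x ∩ G.neighborFinset y,
              (f z - 2 * f y + f x) ^ 2) := by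
        rw [← Finset.mul_sum, Finset.sum_add_distrib, ← Finset.mul_sum]
      have s3 := triangle_sum_ineq G f x hT
      rw [s2] at s1
      have s4 : D⁻¹ * (5 * Q) ≤ D⁻¹ * (4 * Q + ∑ y ∈ Nx,
          ∑ z ∈ G.neighborFinset x ∩ G.neighborFinset y, (f z - 2 * f y + f x) ^ 2) := by
        apply mul_le_mul_of_nonneg_left _ (inv_nonneg.2 hDpos.le)
        rw [hQ]
        linarith [s3]
      calc 5 * D⁻¹ * Q = D⁻¹ * (5 * Q) := by ring
        _ ≤ _ := le_trans s4 s1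
    have hQnn : 0 ≤ Q := Finset.sum_nonneg fun y _ => sq_nonneg _
    have hmono : (G.degree x : ℝ)⁻¹ * (5 * D⁻¹ * Q)
        ≤ (G.degree x : ℝ)⁻¹ * ∑ y ∈ Nx, (((G.degree y : ℝ))⁻¹
            * ∑ z ∈ G.neighborFinset y, (f z - 2 * f y + f x) ^ 2) :=
      mul_le_mul_of_nonneg_left hP (inv_nonneg.2 hd.le)
    have harith : (5 / (2 * D) - 1) * ((2 * (G.degree x : ℝ))⁻¹ * Q)
        = (1 / 4) * ((G.degree x : ℝ)⁻¹ * (5 * D⁻¹ * Q)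
            - 2 * ((G.degree x : ℝ)⁻¹ * Q)) := by
      field_simp
      ring
    rw [harith]
    linarith [hkey, hmono]
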